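/- For all r, s ∈ [0,∞), the Sinkhorn divergence between the symmetric two-point measures μ_r and μ_s on ℝ with quadratic cost equals S_ε(μ_r, μ_s) = ε·( −log( k_c(r,s) + k_c(r,−s) ) + (1/2)·log(1 + k_c(r,−r)) + (1/2)·log(1 + k_c(s,−s)) ), where k_c(x,y) = exp(−(x−y)²/ε). -/

import Mathlib

/-! The Gibbs variational principle bounds `∫ c dγ + ε·KL(γ | μ⊗ν)` below by
`-ε log ∫ exp(-c/ε) d(μ⊗ν)`, with equality at the Gibbs measure, `μ⊗ν` tilted by `-c/ε`.
For the symmetric two-point measures the Gibbs measure already has marginals `μ_r` and `μ_s`,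
since `k_c(-x,-y) = k_c(x,y)` makes all row and column sums of the kernel equal; hence it is
the optimal coupling and `OT_ε(μ_r, μ_s) = -ε log((k_c(r,s) + k_c(r,-s))/2)`. The `log 2`
terms cancel in the Sinkhorn divergence. -/

open MeasureTheory Filter Topology Real
open scoped ENNReal

noncomputable section

/-- `γ` is a coupling of `μ` and `ν`: its marginals are `μ` and `ν`. -/
def IsCoupling {X : Type*} [MeasurableSpace X] (μ ν : Measure X) (γ : Measure (X × X)) : Prop :=
  γ.map Prod.fst = μ ∧ γ.map Prod.snd = ν

/-- The entropic optimal transport cost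
`OT_ε(μ,ν) = inf_{γ ∈ Π(μ,ν)} ∫ c dγ + ε·KL(γ | μ⊗ν)`,
where the infimum is (equivalently) taken over the couplings with finite
Kullback–Leibler divergence `KL(γ | μ⊗ν) = ∫ log(dγ/d(μ⊗ν)) dγ`
(couplings with `KL = +∞` do not contribute to the infimum). -/
noncomputable def entOT {X : Type*} [MeasurableSpace X] (ε : ℝ) (c : X → X → ℝ)
    (μ ν : Measure X) : ℝ :=
  sInf { v : ℝ | ∃ γ : Measure (X × X), IsProbabilityMeasure γ ∧ IsCoupling μ ν γ ∧
    γ ≪ μ.prod ν ∧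
    Integrable (fun p => Real.log ((γ.rnDeriv (μ.prod ν)) p).toReal) γ ∧
    v = (∫ p, c p.1 p.2 ∂γ) + ε * ∫ p, Real.log ((γ.rnDeriv (μ.prod ν)) p).toReal ∂γ }

/-- The Sinkhorn divergence
`S_ε(μ,ν) = OT_ε(μ,ν) − (1/2)·OT_ε(μ,μ) − (1/2)·OT_ε(ν,ν)`. -/
noncomputable def sinkhorn {X : Type*} [MeasurableSpace X] (ε : ℝ) (c : X → X → ℝ)
    (μ ν : Measure X) : ℝ :=
  entOT ε c μ ν - (1 / 2) * entOT ε c μ μ - (1 / 2) * entOT ε c ν ν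

/-- The symmetric two-point measure `μ_r = (1/2)δ_r + (1/2)δ_{−r}` on `ℝ`. -/
noncomputable def mu2 (r : ℝ) : Measure ℝ :=
  ((1 : ℝ≥0∞) / 2) • Measure.dirac r + ((1 : ℝ≥0∞) / 2) • Measure.dirac (-r)

/-- The quadratic cost on `ℝ`. -/
noncomputable def c2 : ℝ → ℝ → ℝ := fun x y => (x - y) ^ 2

/-- The Gaussian kernel `k_c(x,y) = exp(−(x−y)²/ε)`. -/
noncomputable def kc (ε x y : ℝ) : ℝ := Real.exp (-(x - y) ^ 2 / ε)


namespace MeasureTheory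

variable {α β : Type*} [MeasurableSpace α] [MeasurableSpace β]

theorem integral_sub_integral_llr_le_log_integral_exp {γ ρ : Measure α}
    [IsProbabilityMeasure γ] [IsProbabilityMeasure ρ] {f : α → ℝ} (hγρ : γ ≪ ρ)
    (hfγ : Integrable f γ) (hfρ : Integrable (fun x => exp (f x)) ρ)
    (h_int : Integrable (llr γ ρ) γ) :
    ∫ x, f x ∂γ - ∫ x, llr γ ρ x ∂γ ≤ log (∫ x, exp (f x) ∂ρ) := by
  have := isProbabilityMeasure_tilted hfρ
  have h := InformationTheory.integral_llr_add_sub_measure_univ_nonneg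
    (hγρ.trans (absolutelyContinuous_tilted hfρ)) (integrable_llr_tilted_right hγρ hfγ h_int hfρ)
  rw [integral_llr_tilted_right hγρ hfγ hfρ h_int] at h
  simp only [probReal_univ] at h
  linarith

theorem lintegral_ofReal_exp_div_eq_one {ρ : Measure α} {g : α → ℝ}
    (hg : Integrable (fun x => exp (g x)) ρ) {Z : ℝ} (hZ : 0 < Z) (h : ∫ x, exp (g x) ∂ρ = Z) :
    ∫⁻ x, ENNReal.ofReal (exp (g x) / Z) ∂ρ = 1 := by
  rw [← ofReal_integral_eq_lintegral_ofReal (hg.div_const Z)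
    (ae_of_all _ fun _ => by positivity), integral_div, h, div_self hZ.ne', ENNReal.ofReal_one]

variable {μ : Measure α} {ν : Measure β} [IsProbabilityMeasure μ] [IsProbabilityMeasure ν]
  {f : α × β → ℝ}

theorem map_fst_tilted_prod (hf : Integrable (fun p => exp (f p)) (μ.prod ν))
    (hrow : ∀ᵐ x ∂μ, ∫ y, exp (f (x, y)) ∂ν = ∫ p, exp (f p) ∂μ.prod ν) :
    ((μ.prod ν).tilted f).map Prod.fst = μ := by
  ext s hs
  rw [Measure.map_apply measurable_fst hs, ← Set.prod_univ, tilted_apply, setLIntegral_prod _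
    (hf.1.aemeasurable.div_const _).ennreal_ofReal.restrict, ← setLIntegral_one]
  refine setLIntegral_congr_fun_ae hs ?_
  filter_upwards [hrow, hf.prod_right_ae] with x hx hxi _
  rw [Measure.restrict_univ]
  exact lintegral_ofReal_exp_div_eq_one hxi (integral_exp_pos hf) hx

theorem map_snd_tilted_prod (hf : Integrable (fun p => exp (f p)) (μ.prod ν))
    (hcol : ∀ᵐ y ∂ν, ∫ x, exp (f (x, y)) ∂μ = ∫ p, exp (f p) ∂μ.prod ν) :
    ((μ.prod ν).tilted f).map Prod.snd = ν := by
  ext t ht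
  rw [Measure.map_apply measurable_snd ht, ← Set.univ_prod, tilted_apply, setLIntegral_prod_symm _
    (hf.1.aemeasurable.div_const _).ennreal_ofReal.restrict, ← setLIntegral_one]
  refine setLIntegral_congr_fun_ae ht ?_
  filter_upwards [hcol, hf.prod_left_ae] with y hy hyi _
  rw [Measure.restrict_univ]
  exact lintegral_ofReal_exp_div_eq_one hyi (integral_exp_pos hf) hy

end MeasureTheory

section

variable {X : Type*} [MeasurableSpace X] {ε C : ℝ} {c : X → X → ℝ} {μ ν : Measure X}
  [IsProbabilityMeasure μ] [IsProbabilityMeasure ν]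

theorem entOT_eq_neg_mul_log_integral_exp (hε : 0 < ε)
    (hc : AEStronglyMeasurable (fun p : X × X => c p.1 p.2) (μ.prod ν))
    (hcC : ∀ᵐ p ∂μ.prod ν, |c p.1 p.2| ≤ C)
    (hcoup : IsCoupling μ ν ((μ.prod ν).tilted fun p => -c p.1 p.2 / ε)) :
    entOT ε c μ ν = -ε * log (∫ p, exp (-c p.1 p.2 / ε) ∂μ.prod ν) := by
  set ρ := μ.prod ν
  set f : X × X → ℝ := fun p => -c p.1 p.2 / ε
  have hf_meas : AEStronglyMeasurable f ρ := by fun_prop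
  have hf_bdd : ∀ᵐ p ∂ρ, ‖f p‖ ≤ C / ε := hcC.mono fun p hp => by
    rw [Real.norm_eq_abs, abs_div, abs_neg, abs_of_pos hε]
    exact div_le_div_of_nonneg_right hp hε.le
  have hf_int : ∀ γ : Measure (X × X), IsFiniteMeasure γ → γ ≪ ρ → Integrable f γ :=
    fun γ _ hγ => .of_bound (hf_meas.mono_ac hγ) _ (hγ.ae_le hf_bdd)
  have hexp : Integrable (fun p => exp (f p)) ρ :=
    .of_bound (continuous_exp.comp_aestronglyMeasurable hf_meas) (exp (C / ε)) <|
      hf_bdd.mono fun p hp => by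
        rw [Real.norm_of_nonneg (exp_nonneg _)]
        exact exp_le_exp.mpr ((le_abs_self _).trans hp)
  have integral_f (γ : Measure (X × X)) : ε * ∫ p, f p ∂γ = -∫ p, c p.1 p.2 ∂γ := by
    rw [integral_div, integral_neg]
    field_simp
  refine IsLeast.csInf_eq ⟨?_, ?_⟩
  · have hprob := isProbabilityMeasure_tilted hexp
    have hac := tilted_absolutelyContinuous ρ f
    have hllr : llr (ρ.tilted f) ρ =ᵐ[ρ.tilted f] fun p => f p - log (∫ p, exp (f p) ∂ρ) :=
      hac.ae_le (log_rnDeriv_tilted_left_self hexp)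
    have hfγ := hf_int _ inferInstance hac
    refine ⟨ρ.tilted f, hprob, hcoup, hac, (hfγ.sub (integrable_const _)).congr hllr.symm, ?_⟩
    change _ = _ + ε * ∫ p, llr (ρ.tilted f) ρ p ∂ρ.tilted f
    rw [integral_congr_ae hllr, integral_sub hfγ (integrable_const _), mul_sub, integral_f,
      integral_const, probReal_univ, one_smul]
    ring
  · rintro v ⟨γ, hγ, -, hac, hint, rfl⟩
    have key := integral_sub_integral_llr_le_log_integral_exp hac (hf_int γ inferInstance hac)
      hexp hint
    have := mul_le_mul_of_nonneg_left key hε.le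
    rw [mul_sub, integral_f] at this
    change _ ≤ _ + ε * ∫ p, llr γ ρ p ∂γ
    linarith

end

section TwoPoint

variable {ε : ℝ} (r s : ℝ)

instance : IsProbabilityMeasure (mu2 r) := by
  constructor
  simp [mu2, ENNReal.inv_two_add_inv_two]

theorem ae_mu2 : ∀ᵐ x ∂mu2 r, x = r ∨ x = -r := by
  rw [mu2, ae_add_measure_iff]
  refine ⟨Measure.ae_smul_measure ?_ _, Measure.ae_smul_measure ?_ _⟩ <;> simp

theorem integral_mu2 (g : ℝ → ℝ) : ∫ x, g x ∂mu2 r = (g r + g (-r)) / 2 := by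
  have hint (a : ℝ) : Integrable g ((1 / 2 : ℝ≥0∞) • Measure.dirac a) :=
    (integrable_dirac (by simp)).smul_measure (by simp)
  rw [mu2, integral_add_measure (hint r) (hint (-r)), integral_smul_measure,
    integral_smul_measure, integral_dirac, integral_dirac]
  simp only [one_div, ENNReal.toReal_inv, ENNReal.toReal_ofNat, smul_eq_mul]
  ring

theorem kc_self (x : ℝ) : kc ε x x = 1 := by simp [kc]

theorem kc_neg_neg (x y : ℝ) : kc ε (-x) (-y) = kc ε x y := by
  rw [kc, kc, show -x - -y = -(x - y) by ring, neg_sq]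

theorem kc_neg_left (x y : ℝ) : kc ε (-x) y = kc ε x (-y) := by
  rw [kc, kc, show -x - y = -(x - -y) by ring, neg_sq]

theorem integrable_exp_neg_c2_div (hε : 0 < ε) :
    Integrable (fun p : ℝ × ℝ => exp (-c2 p.1 p.2 / ε)) ((mu2 r).prod (mu2 s)) := by
  refine .of_bound (by unfold c2; fun_prop) 1 (ae_of_all _ fun p => ?_)
  rw [Real.norm_of_nonneg (exp_nonneg _), exp_le_one_iff, c2]
  exact div_nonpos_of_nonpos_of_nonneg (neg_nonpos.mpr (sq_nonneg _)) hε.le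

theorem integral_exp_neg_c2_div (hε : 0 < ε) :
    ∫ p, exp (-c2 p.1 p.2 / ε) ∂(mu2 r).prod (mu2 s) = (kc ε r s + kc ε r (-s)) / 2 := by
  rw [integral_prod _ (integrable_exp_neg_c2_div r s hε)]
  simp only [integral_mu2]
  change ((kc ε r s + kc ε r (-s)) / 2 + (kc ε (-r) s + kc ε (-r) (-s)) / 2) / 2 = _
  rw [kc_neg_left, kc_neg_neg]
  ring

theorem isCoupling_tilted_mu2 (hε : 0 < ε) :
    IsCoupling (mu2 r) (mu2 s) (((mu2 r).prod (mu2 s)).tilted fun p => -c2 p.1 p.2 / ε) := by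
  rw [IsCoupling, map_fst_tilted_prod (integrable_exp_neg_c2_div r s hε),
    map_snd_tilted_prod (integrable_exp_neg_c2_div r s hε)]
  · exact ⟨rfl, rfl⟩
  · filter_upwards [ae_mu2 s] with y hy
    rw [integral_mu2, integral_exp_neg_c2_div r s hε]
    change (kc ε r y + kc ε (-r) y) / 2 = _
    rcases hy with rfl | rfl <;> simp only [kc_neg_left, neg_neg, add_comm]
  · filter_upwards [ae_mu2 r] with x hx
    rw [integral_mu2, integral_exp_neg_c2_div r s hε]
    change (kc ε x s + kc ε x (-s)) / 2 = _
    rcases hx with rfl | rfl <;> simp only [kc_neg_left, neg_neg, add_comm]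

theorem abs_c2_le (x y : ℝ) : |c2 x y| ≤ (|x| + |y|) ^ 2 := by
  rw [c2, abs_of_nonneg (sq_nonneg _), ← sq_abs]
  exact pow_le_pow_left₀ (abs_nonneg _) (abs_sub _ _) 2

theorem abs_eq_of_ae_mu2 : ∀ᵐ x ∂mu2 r, |x| = |r| :=
  (ae_mu2 r).mono fun x hx => by rcases hx with rfl | rfl <;> simp

theorem entOT_mu2 (hε : 0 < ε) :
    entOT ε c2 (mu2 r) (mu2 s) = -ε * log ((kc ε r s + kc ε r (-s)) / 2) := by
  rw [entOT_eq_neg_mul_log_integral_exp hε (C := (|r| + |s|) ^ 2) (by unfold c2; fun_prop) _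
    (isCoupling_tilted_mu2 r s hε), integral_exp_neg_c2_div r s hε]
  filter_upwards [Measure.quasiMeasurePreserving_fst.ae (abs_eq_of_ae_mu2 r),
    Measure.quasiMeasurePreserving_snd.ae (abs_eq_of_ae_mu2 s)] with p hx hy
  rw [← hx, ← hy]
  exact abs_c2_le _ _

end TwoPoint

theorem stmt5_general (ε : ℝ) (hε : 0 < ε) (r s : ℝ) :
    sinkhorn ε c2 (mu2 r) (mu2 s)
      = ε * (-Real.log (kc ε r s + kc ε r (-s))
          + (1 / 2) * Real.log (1 + kc ε r (-r))
          + (1 / 2) * Real.log (1 + kc ε s (-s))) := by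
  have hk (x y : ℝ) : 0 < kc ε x y := exp_pos _
  rw [sinkhorn, entOT_mu2 r s hε, entOT_mu2 r r hε, entOT_mu2 s s hε, kc_self, kc_self,
    log_div (add_pos (hk r s) (hk r (-s))).ne' two_ne_zero,
    log_div (by linarith [hk r (-r)]) two_ne_zero, log_div (by linarith [hk s (-s)]) two_ne_zero]
  ring

/-- **Sinkhorn divergence between symmetric two-point measures.** For `r, s ≥ 0`,
`S_ε(μ_r, μ_s) = ε·(−log(k_c(r,s)+k_c(r,−s)) + (1/2)log(1+k_c(r,−r)) + (1/2)log(1+k_c(s,−s)))`. -/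
theorem stmt5 (ε : ℝ) (hε : 0 < ε) (r s : ℝ) (hr : 0 ≤ r) (hs : 0 ≤ s) :
    sinkhorn ε c2 (mu2 r) (mu2 s)
      = ε * (-Real.log (kc ε r s + kc ε r (-s))
          + (1 / 2) * Real.log (1 + kc ε r (-r))
          + (1 / 2) * Real.log (1 + kc ε s (-s))) :=
  stmt5_general ε hε r s
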